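/- Let d ≥ 1, let (X_i)_{i≥1} be i.i.d. ℝ^d-valued random variables whose common law has a bounded density f with respect to Lebesgue measure, let K : ℝ^d → ℝ be bounded, measurable and compactly supported, and let (Hₙ)_{n≥1} be a sequence of invertible d×d real matrices with n·|det Hₙ| → ∞ as n → ∞. Then for all x, t ∈ ℝ^d, the random variables |det Hₙ| · (1/n) ∑_{i=1}^n K_{Hₙ}(X_i − x) K_{Hₙ}(X_i − t) − ∫_{ℝ^d} K(p) K(p − Hₙ⁻¹(x − t)) f(t + Hₙp) dp converge to 0 in probability as n → ∞. -/

import Mathlib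

/-!
Put `Yᵢ = K_H(Xᵢ - x) K_H(Xᵢ - t)`. Since `K_H(y - x) = |det H|⁻¹ K(H⁻¹(y - t) - H⁻¹(x - t))`,
the substitution `y = t + H p` in the density integral shows that `|det H| E[Yᵢ]` is exactly the
centring integral, while `E[Yᵢ²] ≤ |det H|⁻³ ‖f‖∞ ‖K‖∞² ∫ K²`. By pairwise independence the
statistic `|det H| (1/n) ∑ Yᵢ` has variance at most a constant times `1 / (n |det H|) → 0`, and
Chebyshev's inequality concludes.
-/
open MeasureTheory ProbabilityTheory Filter
open scoped ENNReal NNReal Topology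

noncomputable section

/-- The rescaled kernel `K_H(v) = |det H|⁻¹ * K (H⁻¹ v)`. -/
def kernelScaled {d : ℕ} (H : Matrix (Fin d) (Fin d) ℝ) (K : (Fin d → ℝ) → ℝ)
    (v : Fin d → ℝ) : ℝ :=
  |H.det|⁻¹ * K (H⁻¹.mulVec v)

open scoped Matrix

theorem integral_eq_abs_det_smul_integral_comp_affine {d : ℕ} {E : Type*} [NormedAddCommGroup E]
    [NormedSpace ℝ E] {H : Matrix (Fin d) (Fin d) ℝ} (hH : H.det ≠ 0) (t : Fin d → ℝ)
    (ψ : (Fin d → ℝ) → E) :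
    ∫ y, ψ y = |H.det| • ∫ p, ψ (t + H *ᵥ p) := by
  have hH' : IsUnit H := (Matrix.isUnit_iff_isUnit_det H).2 hH.isUnit
  have hderiv : ∀ p, HasFDerivAt (fun p => t + H *ᵥ p)
      (LinearMap.toContinuousLinearMap (Matrix.toLin' H)) p := fun p =>
    (LinearMap.toContinuousLinearMap (Matrix.toLin' H)).hasFDerivAt.const_add t
  have hsurj : Function.Surjective fun p => t + H *ᵥ p := fun y =>
    ⟨H⁻¹ *ᵥ (y - t), by simp [Matrix.mulVec_mulVec, Matrix.mul_nonsing_inv _ hH.isUnit]⟩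
  have hinj : Function.Injective fun p => t + H *ᵥ p := fun p q hpq => by
    simpa using (Matrix.mulVec_injective_iff_isUnit.2 hH') (add_left_cancel hpq)
  have := integral_image_eq_integral_abs_det_fderiv_smul volume MeasurableSet.univ
    (fun p _ => (hderiv p).hasFDerivWithinAt) hinj.injOn ψ
  rwa [Set.image_univ_of_surjective hsurj, setIntegral_univ, setIntegral_univ,
    LinearMap.det_toContinuousLinearMap, LinearMap.det_toLin', integral_smul] at this

theorem integral_comp_eq_integral_mul_of_map_eq_withDensity {Ω α : Type*} [MeasurableSpace Ω]
    [MeasurableSpace α] {μ : Measure Ω} {ν : Measure α} {X : Ω → α} (hX : Measurable X)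
    {f : α → ℝ} (hf : Measurable f) (hf0 : ∀ y, 0 ≤ f y)
    (hlaw : μ.map X = ν.withDensity (fun y => ENNReal.ofReal (f y)))
    {g : α → ℝ} (hg : Measurable g) :
    ∫ ω, g (X ω) ∂μ = ∫ y, f y * g y ∂ν := by
  rw [← integral_map hX.aemeasurable hg.aestronglyMeasurable, hlaw,
    integral_withDensity_eq_integral_toReal_smul hf.ennreal_ofReal
      (Eventually.of_forall fun _ => ENNReal.ofReal_lt_top)]
  simp_rw [ENNReal.toReal_ofReal (hf0 _), smul_eq_mul]

section Kernel

variable {d : ℕ} {H : Matrix (Fin d) (Fin d) ℝ} {K : (Fin d → ℝ) → ℝ}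

theorem measurable_kernelScaled (hK : Measurable K) : Measurable (kernelScaled H K) :=
  measurable_const.mul
    (hK.comp (Continuous.matrix_mulVec continuous_const continuous_id).measurable)

theorem measurable_kernelScaled_sub_mul_kernelScaled_sub (hK : Measurable K) (x t : Fin d → ℝ) :
    Measurable fun y => kernelScaled H K (y - x) * kernelScaled H K (y - t) :=
  ((measurable_kernelScaled hK).comp (measurable_sub_const x)).mul
    ((measurable_kernelScaled hK).comp (measurable_sub_const t))

theorem abs_kernelScaled_le {CK : ℝ} (hKC : ∀ u, |K u| ≤ CK) (v : Fin d → ℝ) :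
    |kernelScaled H K v| ≤ |H.det|⁻¹ * CK := by
  rw [kernelScaled, abs_mul, abs_inv, abs_abs]
  exact mul_le_mul_of_nonneg_left (hKC _) (by positivity)

theorem kernelScaled_sub_mul_kernelScaled_sub (x t y : Fin d → ℝ) :
    kernelScaled H K (y - x) * kernelScaled H K (y - t) =
      |H.det|⁻¹ ^ 2 * (K (H⁻¹ *ᵥ (y - t)) * K (H⁻¹ *ᵥ (y - t) - H⁻¹ *ᵥ (x - t))) := by
  rw [kernelScaled, kernelScaled, show y - x = (y - t) - (x - t) by abel, Matrix.mulVec_sub]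
  ring

variable {Ω : Type*} [MeasurableSpace Ω] {μ : Measure Ω} {X : Ω → (Fin d → ℝ)}
  {f : (Fin d → ℝ) → ℝ}

theorem integral_comp_inv_mulVec_sub (hX : Measurable X) (hf : Measurable f)
    (hf0 : ∀ y, 0 ≤ f y) (hlaw : μ.map X = volume.withDensity (fun y => ENNReal.ofReal (f y)))
    (hH : H.det ≠ 0) (t : Fin d → ℝ) {ψ : (Fin d → ℝ) → ℝ} (hψ : Measurable ψ) :
    ∫ ω, ψ (H⁻¹ *ᵥ (X ω - t)) ∂μ = |H.det| * ∫ p, f (t + H *ᵥ p) * ψ p := by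
  have hcomp : Measurable fun y => ψ (H⁻¹ *ᵥ (y - t)) :=
    hψ.comp ((Continuous.matrix_mulVec continuous_const
      (continuous_id.sub continuous_const)).measurable)
  rw [integral_comp_eq_integral_mul_of_map_eq_withDensity hX hf hf0 hlaw hcomp,
    integral_eq_abs_det_smul_integral_comp_affine hH t, smul_eq_mul]
  simp [Matrix.mulVec_mulVec, Matrix.nonsing_inv_mul _ hH.isUnit]

theorem memLp_kernelScaled_mul_kernelScaled [IsFiniteMeasure μ] (hX : Measurable X)
    (hK : Measurable K) {CK : ℝ} (hKC : ∀ u, |K u| ≤ CK) (x t : Fin d → ℝ) (p : ℝ≥0∞) :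
    MemLp (fun ω => kernelScaled H K (X ω - x) * kernelScaled H K (X ω - t)) p μ := by
  refine MemLp.of_bound ?_ ((|H.det|⁻¹ * CK) ^ 2) (Eventually.of_forall fun ω => ?_)
  · exact ((measurable_kernelScaled_sub_mul_kernelScaled_sub hK x t).comp
      hX).aestronglyMeasurable
  · rw [Real.norm_eq_abs, abs_mul, sq]
    exact mul_le_mul (abs_kernelScaled_le hKC _) (abs_kernelScaled_le hKC _) (abs_nonneg _)
      ((abs_nonneg _).trans (abs_kernelScaled_le hKC 0))

theorem integral_kernelScaled_mul_kernelScaled (hX : Measurable X) (hf : Measurable f)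
    (hf0 : ∀ y, 0 ≤ f y) (hlaw : μ.map X = volume.withDensity (fun y => ENNReal.ofReal (f y)))
    (hK : Measurable K) (hH : H.det ≠ 0) (x t : Fin d → ℝ) :
    ∫ ω, kernelScaled H K (X ω - x) * kernelScaled H K (X ω - t) ∂μ =
      |H.det|⁻¹ * ∫ p, K p * K (p - H⁻¹ *ᵥ (x - t)) * f (t + H *ᵥ p) := by
  simp_rw [kernelScaled_sub_mul_kernelScaled_sub x t]
  rw [integral_const_mul, integral_comp_inv_mulVec_sub hX hf hf0 hlaw hH t
    (ψ := fun p => K p * K (p - H⁻¹ *ᵥ (x - t))) (hK.mul (hK.comp (measurable_sub_const _)))]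
  simp_rw [mul_comm (f _)]
  have : |H.det| ≠ 0 := abs_ne_zero.2 hH
  field_simp

theorem integral_sq_kernelScaled_mul_kernelScaled_le (hX : Measurable X) (hf : Measurable f)
    (hf0 : ∀ y, 0 ≤ f y) {Cf : ℝ} (hfC : ∀ y, f y ≤ Cf)
    (hlaw : μ.map X = volume.withDensity (fun y => ENNReal.ofReal (f y)))
    (hK : Measurable K) {CK : ℝ} (hKC : ∀ u, |K u| ≤ CK) (hKsupp : HasCompactSupport K)
    (hH : H.det ≠ 0) (x t : Fin d → ℝ) :
    ∫ ω, (kernelScaled H K (X ω - x) * kernelScaled H K (X ω - t)) ^ 2 ∂μ ≤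
      |H.det|⁻¹ ^ 3 * (Cf * CK ^ 2 * ∫ p, K p ^ 2) := by
  set a := H⁻¹ *ᵥ (x - t)
  have hK2 : Integrable (fun p => K p ^ 2) :=
    (hKsupp.memLp_of_bound hK.aestronglyMeasurable CK (Eventually.of_forall hKC)).integrable_sq
  have hbound :
      ∫ p, f (t + H *ᵥ p) * (K p ^ 2 * K (p - a) ^ 2) ≤ Cf * CK ^ 2 * ∫ p, K p ^ 2 := by
    rw [← integral_const_mul]
    refine integral_mono_of_nonneg
      (Eventually.of_forall fun p => by positivity [hf0 (t + H *ᵥ p)]) (hK2.const_mul _)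
      (Eventually.of_forall fun p => ?_)
    have hKa : K (p - a) ^ 2 ≤ CK ^ 2 := sq_le_sq' (abs_le.1 (hKC _)).1 (abs_le.1 (hKC _)).2
    calc f (t + H *ᵥ p) * (K p ^ 2 * K (p - a) ^ 2)
        = f (t + H *ᵥ p) * K (p - a) ^ 2 * K p ^ 2 := by ring
      _ ≤ Cf * CK ^ 2 * K p ^ 2 := by
          have hCf : 0 ≤ Cf := (hf0 0).trans (hfC 0)
          gcongr
          exact hfC _
  simp_rw [kernelScaled_sub_mul_kernelScaled_sub x t, mul_pow]
  rw [integral_const_mul, integral_comp_inv_mulVec_sub hX hf hf0 hlaw hH t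
    (ψ := fun p => K p ^ 2 * K (p - a) ^ 2)
    ((hK.pow_const 2).mul ((hK.comp (measurable_sub_const _)).pow_const 2))]
  have hD : |H.det| ≠ 0 := abs_ne_zero.2 hH
  calc (|H.det|⁻¹ ^ 2) ^ 2 * (|H.det| * ∫ p, f (t + H *ᵥ p) * (K p ^ 2 * K (p - a) ^ 2))
      = |H.det|⁻¹ ^ 3 * ∫ p, f (t + H *ᵥ p) * (K p ^ 2 * K (p - a) ^ 2) := by
        field_simp
    _ ≤ |H.det|⁻¹ ^ 3 * (Cf * CK ^ 2 * ∫ p, K p ^ 2) := by gcongr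

end Kernel

section SampleMean

variable {Ω : Type*} [MeasurableSpace Ω] {μ : Measure Ω}

def sampleMean (Y : ℕ → Ω → ℝ) (n : ℕ) (ω : Ω) : ℝ :=
  (n : ℝ)⁻¹ * ∑ i ∈ Finset.range n, Y i ω

theorem memLp_sampleMean {Y : ℕ → Ω → ℝ} {p : ℝ≥0∞} (hY : ∀ i, MemLp (Y i) p μ) (n : ℕ) :
    MemLp (sampleMean Y n) p μ :=
  (memLp_finsetSum (Finset.range n) fun i _ => hY i).const_mul _

theorem integral_sampleMean {Y : ℕ → Ω → ℝ} (hY : ∀ i, Integrable (Y i) μ) {m : ℝ}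
    (hm : ∀ i, μ[Y i] = m) {n : ℕ} (hn : n ≠ 0) : μ[sampleMean Y n] = m := by
  simp only [sampleMean]
  rw [integral_const_mul, integral_finsetSum _ fun i _ => hY i]
  simp [hm, hn]

theorem variance_sampleMean_le {Y : ℕ → Ω → ℝ} (hY : ∀ i, MemLp (Y i) 2 μ)
    (hindep : Pairwise fun i j => IndepFun (Y i) (Y j) μ) {v : ℝ}
    (hv : ∀ i, variance (Y i) μ ≤ v) (n : ℕ) :
    variance (sampleMean Y n) μ ≤ v / n := by
  have hsum : variance (∑ i ∈ Finset.range n, Y i) μ ≤ n * v := by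
    rw [IndepFun.variance_sum (fun i _ => hY i) fun i _ j _ hij => hindep hij]
    simpa using Finset.sum_le_card_nsmul (Finset.range n) _ _ fun i _ => hv i
  have hmean : sampleMean Y n = (n : ℝ)⁻¹ • ∑ i ∈ Finset.range n, Y i := by
    ext ω
    simp [sampleMean]
  calc variance (sampleMean Y n) μ ≤ (n : ℝ)⁻¹ ^ 2 * (n * v) := by
        rw [hmean, variance_smul]
        gcongr
    _ = v / n := by rcases eq_or_ne (n : ℝ) 0 with hn | hn <;> [simp [hn]; field_simp]

end SampleMean

theorem tendsto_measure_lt_abs_sub_integral_of_variance_le {Ω ι : Type*} [MeasurableSpace Ω]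
    {μ : Measure Ω} [IsFiniteMeasure μ] {l : Filter ι} {T : ι → Ω → ℝ}
    (hT : ∀ n, MemLp (T n) 2 μ) {b : ι → ℝ} (hvar : ∀ n, variance (T n) μ ≤ b n)
    (hb : Tendsto b l (𝓝 0)) {δ : ℝ} (hδ : 0 < δ) :
    Tendsto (fun n => μ {ω | δ < |T n ω - μ[T n]|}) l (𝓝 0) := by
  have hlim : Tendsto (fun n => ENNReal.ofReal (b n / δ ^ 2)) l (𝓝 0) := by
    simpa using ENNReal.tendsto_ofReal (hb.div_const (δ ^ 2))
  refine tendsto_of_tendsto_of_tendsto_of_le_of_le tendsto_const_nhds hlim (fun _ => zero_le)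
    fun n => ?_
  calc μ {ω | δ < |T n ω - μ[T n]|} ≤ μ {ω | δ ≤ |T n ω - μ[T n]|} :=
        measure_mono (Set.ofPred_subset_ofPred.2 fun _ => le_of_lt)
    _ ≤ ENNReal.ofReal (variance (T n) μ / δ ^ 2) := meas_ge_le_variance_div_sq (hT n) hδ
    _ ≤ ENNReal.ofReal (b n / δ ^ 2) := by gcongr; exact hvar n

theorem W2n_tendsto_inProbability_general {d : ℕ}
    {Ω : Type*} [MeasurableSpace Ω] (μ : Measure Ω) [IsProbabilityMeasure μ]
    (X : ℕ → Ω → (Fin d → ℝ)) (hXmeas : ∀ i, Measurable (X i))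
    (hindep : iIndepFun X μ)
    (f : (Fin d → ℝ) → ℝ) (hfmeas : Measurable f) (hfnonneg : ∀ y, 0 ≤ f y)
    (hfbd : ∃ C, ∀ y, f y ≤ C)
    (hlaw : ∀ i, μ.map (X i) = volume.withDensity (fun y => ENNReal.ofReal (f y)))
    (K : (Fin d → ℝ) → ℝ) (hKmeas : Measurable K) (hKbd : ∃ C, ∀ u, |K u| ≤ C)
    (hKsupp : HasCompactSupport K)
    (Hseq : ℕ → Matrix (Fin d) (Fin d) ℝ) (hHinv : ∀ n, (Hseq n).det ≠ 0)
    (hHlim : Tendsto (fun n : ℕ => (n : ℝ) * |(Hseq n).det|) atTop atTop)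
    (x t : Fin d → ℝ) :
    ∀ δ : ℝ, 0 < δ →
      Tendsto (fun n : ℕ =>
          μ {ω | δ < abs (|(Hseq n).det| * ((n : ℝ)⁻¹ *
              ∑ i ∈ Finset.range n,
                kernelScaled (Hseq n) K (X i ω - x) * kernelScaled (Hseq n) K (X i ω - t)) -
            ∫ p, K p * K (p - (Hseq n)⁻¹.mulVec (x - t)) * f (t + (Hseq n).mulVec p))})
        atTop (𝓝 0) := by
  intro δ hδ
  obtain ⟨Cf, hfC⟩ := hfbd
  obtain ⟨CK, hKC⟩ := hKbd
  set B := Cf * CK ^ 2 * ∫ p, K p ^ 2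
  let D n := |(Hseq n).det|
  let Y n i ω := kernelScaled (Hseq n) K (X i ω - x) * kernelScaled (Hseq n) K (X i ω - t)
  have hY n i : MemLp (Y n i) 2 μ :=
    memLp_kernelScaled_mul_kernelScaled (hXmeas i) hKmeas hKC x t 2
  have hYmean n i := integral_kernelScaled_mul_kernelScaled (μ := μ) (hXmeas i) hfmeas hfnonneg
    (hlaw i) hKmeas (hHinv n) x t
  have hYvar n i : variance (Y n i) μ ≤ (D n)⁻¹ ^ 3 * B :=
    (variance_le_expectation_sq (hY n i).aestronglyMeasurable).trans
      (integral_sq_kernelScaled_mul_kernelScaled_le (hXmeas i) hfmeas hfnonneg hfC (hlaw i)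
        hKmeas hKC hKsupp (hHinv n) x t)
  have hYindep n : Pairwise fun i j => IndepFun (Y n i) (Y n j) μ := fun i j hij =>
    have hg := measurable_kernelScaled_sub_mul_kernelScaled_sub (H := Hseq n) hKmeas x t
    (hindep.indepFun hij).comp hg hg
  have hTvar n : variance (fun ω => D n * sampleMean (Y n) n ω) μ ≤ B / (n * D n) := by
    have hD : D n ≠ 0 := abs_ne_zero.2 (hHinv n)
    calc variance (fun ω => D n * sampleMean (Y n) n ω) μ ≤ D n ^ 2 * ((D n)⁻¹ ^ 3 * B / n) := by
          rw [variance_const_mul]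
          gcongr
          exact variance_sampleMean_le (hY n) (hYindep n) (hYvar n) n
      _ = B / (n * D n) := by field_simp
  have hb : Tendsto (fun n : ℕ => B / (n * D n)) atTop (𝓝 0) := by
    simpa [div_eq_mul_inv] using hHlim.inv_tendsto_atTop.const_mul B
  refine (tendsto_measure_lt_abs_sub_integral_of_variance_le
    (fun n => (memLp_sampleMean (hY n) n).const_mul (D n)) hTvar hb hδ).congr' ?_
  filter_upwards [eventually_ge_atTop 1] with n hn
  rw [integral_const_mul, integral_sampleMean (fun i => (hY n i).integrable one_le_two)
    (hYmean n) (by omega), mul_inv_cancel_left₀ (abs_ne_zero.2 (hHinv n))]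
  rfl

/-- Conclusion of Lemma 2 in additive form: if `n |det Hₙ| → ∞`, then
`|det Hₙ| W₂ₙ(x,t) − ∫ K(p) K(p − Hₙ⁻¹(x−t)) f(t + Hₙ p) dp → 0` in probability. -/
theorem W2n_tendsto_inProbability {d : ℕ} (hd : 1 ≤ d)
    {Ω : Type*} [MeasurableSpace Ω] (μ : Measure Ω) [IsProbabilityMeasure μ]
    (X : ℕ → Ω → (Fin d → ℝ)) (hXmeas : ∀ i, Measurable (X i))
    (hindep : iIndepFun X μ)
    (f : (Fin d → ℝ) → ℝ) (hfmeas : Measurable f) (hfnonneg : ∀ y, 0 ≤ f y)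
    (hfbd : ∃ C, ∀ y, f y ≤ C)
    (hlaw : ∀ i, μ.map (X i) = volume.withDensity (fun y => ENNReal.ofReal (f y)))
    (K : (Fin d → ℝ) → ℝ) (hKmeas : Measurable K) (hKbd : ∃ C, ∀ u, |K u| ≤ C)
    (hKsupp : HasCompactSupport K)
    (Hseq : ℕ → Matrix (Fin d) (Fin d) ℝ) (hHinv : ∀ n, (Hseq n).det ≠ 0)
    (hHlim : Tendsto (fun n : ℕ => (n : ℝ) * |(Hseq n).det|) atTop atTop)
    (x t : Fin d → ℝ) :
    ∀ δ : ℝ, 0 < δ →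
      Tendsto (fun n : ℕ =>
          μ {ω | δ < abs (|(Hseq n).det| * ((n : ℝ)⁻¹ *
              ∑ i ∈ Finset.range n,
                kernelScaled (Hseq n) K (X i ω - x) * kernelScaled (Hseq n) K (X i ω - t)) -
            ∫ p, K p * K (p - (Hseq n)⁻¹.mulVec (x - t)) * f (t + (Hseq n).mulVec p))})
        atTop (𝓝 0) :=
  W2n_tendsto_inProbability_general μ X hXmeas hindep f hfmeas hfnonneg hfbd hlaw K hKmeas hKbd
    hKsupp Hseq hHinv hHlim x t
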